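/- Let a₁,a₂,b,c₁,c₂ ∈ ℝ and ω the 1-form of the previous context on {x₃ > 0} ⊂ ℝ³. Then ω is a contact form (i.e., ω ∧ dω is nowhere vanishing on {x₃ > 0}) if and only if a₁c₂ ≠ a₂c₁. -/

import Mathlib

/-- Components of the dual 1-form `ω` on `{x₃ > 0} ⊂ ℝ³`. -/
noncomputable def ww1 (a₁ a₂ b c₁ x₁ x₂ x₃ : ℝ) : ℝ :=
  (1 / x₃ ^ 2) * (a₁ / 2 * (x₁ ^ 2 - x₂ ^ 2) + a₂ * x₁ * x₂ + b * x₁ + c₁) - a₁ / 2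
noncomputable def ww2 (a₁ a₂ b c₂ x₁ x₂ x₃ : ℝ) : ℝ :=
  (1 / x₃ ^ 2) * (a₂ / 2 * (x₂ ^ 2 - x₁ ^ 2) + a₁ * x₁ * x₂ + b * x₂ + c₂) - a₂ / 2
noncomputable def ww3 (a₁ a₂ b x₁ x₂ x₃ : ℝ) : ℝ := (a₁ * x₁ + a₂ * x₂ + b) / x₃

/-- The coefficient of `dx₁∧dx₂∧dx₃` in `ω ∧ dω`. -/
noncomputable def wdw (a₁ a₂ b c₁ c₂ x₁ x₂ x₃ : ℝ) : ℝ :=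
  ww1 a₁ a₂ b c₁ x₁ x₂ x₃ *
      (deriv (fun s => ww3 a₁ a₂ b x₁ s x₃) x₂ -
        deriv (fun s => ww2 a₁ a₂ b c₂ x₁ x₂ s) x₃) -
    ww2 a₁ a₂ b c₂ x₁ x₂ x₃ *
      (deriv (fun s => ww3 a₁ a₂ b s x₂ x₃) x₁ -
        deriv (fun s => ww1 a₁ a₂ b c₁ x₁ x₂ s) x₃) +
    ww3 a₁ a₂ b x₁ x₂ x₃ *
      (deriv (fun s => ww2 a₁ a₂ b c₂ s x₂ x₃) x₁ -
        deriv (fun s => ww1 a₁ a₂ b c₁ x₁ s x₃) x₂)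

/-! The `x₁`, `x₂`-dependence of `ω ∧ dω` cancels completely: its coefficient is
`2 (a₂c₁ - a₁c₂) / x₃³`. -/

theorem hasDerivAt_quadratic (A B C x : ℝ) :
    HasDerivAt (fun s => A * s ^ 2 + B * s + C) (2 * A * x + B) x := by
  have hsq : HasDerivAt (fun s : ℝ => s ^ 2) (2 * x) x := by simpa using hasDerivAt_pow 2 x
  have h : HasDerivAt (fun s => A * s ^ 2 + B * s + C) (A * (2 * x) + B * 1) x :=
    ((hsq.const_mul A).add ((hasDerivAt_id x).const_mul B)).add_const C
  convert h using 1
  ring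

theorem deriv_quadratic (A B C x : ℝ) :
    deriv (fun s => A * s ^ 2 + B * s + C) x = 2 * A * x + B :=
  (hasDerivAt_quadratic A B C x).deriv

theorem deriv_div_sq_sub (K C : ℝ) {x : ℝ} (hx : x ≠ 0) :
    deriv (fun s => K / s ^ 2 - C) x = -2 * K / x ^ 3 := by
  have hsq : HasDerivAt (fun s : ℝ => s ^ 2) (2 * x) x := by simpa using hasDerivAt_pow 2 x
  have h : HasDerivAt (fun s => K / s ^ 2 - C) (K * (-(2 * x) / (x ^ 2) ^ 2)) x :=
    ((hsq.inv (pow_ne_zero 2 hx)).const_mul K).sub_const C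
  rw [h.deriv]
  field_simp

section

variable {a₁ a₂ b c₁ c₂ x₁ x₂ x₃ : ℝ}

theorem deriv_ww1_x₂ :
    deriv (fun s => ww1 a₁ a₂ b c₁ x₁ s x₃) x₂ = (a₂ * x₁ - a₁ * x₂) / x₃ ^ 2 := by
  have hq : (fun s => ww1 a₁ a₂ b c₁ x₁ s x₃) = fun s =>
      -a₁ / (2 * x₃ ^ 2) * s ^ 2 + a₂ * x₁ / x₃ ^ 2 * s +
        ((a₁ / 2 * x₁ ^ 2 + b * x₁ + c₁) / x₃ ^ 2 - a₁ / 2) := by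
    funext s
    simp only [ww1]
    ring
  rw [hq, deriv_quadratic]
  ring

theorem deriv_ww2_x₁ :
    deriv (fun s => ww2 a₁ a₂ b c₂ s x₂ x₃) x₁ = (a₁ * x₂ - a₂ * x₁) / x₃ ^ 2 := by
  have hq : (fun s => ww2 a₁ a₂ b c₂ s x₂ x₃) = fun s =>
      -a₂ / (2 * x₃ ^ 2) * s ^ 2 + a₁ * x₂ / x₃ ^ 2 * s +
        ((a₂ / 2 * x₂ ^ 2 + b * x₂ + c₂) / x₃ ^ 2 - a₂ / 2) := by
    funext s
    simp only [ww2]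
    ring
  rw [hq, deriv_quadratic]
  ring

theorem deriv_ww3_x₁ : deriv (fun s => ww3 a₁ a₂ b s x₂ x₃) x₁ = a₁ / x₃ := by
  simp [ww3]

theorem deriv_ww3_x₂ : deriv (fun s => ww3 a₁ a₂ b x₁ s x₃) x₂ = a₂ / x₃ := by
  simp [ww3]

theorem deriv_ww1_x₃ (hx₃ : x₃ ≠ 0) :
    deriv (fun s => ww1 a₁ a₂ b c₁ x₁ x₂ s) x₃ =
      -2 * (a₁ / 2 * (x₁ ^ 2 - x₂ ^ 2) + a₂ * x₁ * x₂ + b * x₁ + c₁) / x₃ ^ 3 := by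
  simp only [ww1, one_div_mul_eq_div]
  exact deriv_div_sq_sub _ _ hx₃

theorem deriv_ww2_x₃ (hx₃ : x₃ ≠ 0) :
    deriv (fun s => ww2 a₁ a₂ b c₂ x₁ x₂ s) x₃ =
      -2 * (a₂ / 2 * (x₂ ^ 2 - x₁ ^ 2) + a₁ * x₁ * x₂ + b * x₂ + c₂) / x₃ ^ 3 := by
  simp only [ww2, one_div_mul_eq_div]
  exact deriv_div_sq_sub _ _ hx₃

theorem wdw_eq (hx₃ : x₃ ≠ 0) :
    wdw a₁ a₂ b c₁ c₂ x₁ x₂ x₃ = 2 * (a₂ * c₁ - a₁ * c₂) / x₃ ^ 3 := by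
  rw [wdw, deriv_ww1_x₂, deriv_ww1_x₃ hx₃, deriv_ww2_x₁, deriv_ww2_x₃ hx₃,
    deriv_ww3_x₁, deriv_ww3_x₂, ww1, ww2, ww3]
  field_simp
  ring

theorem wdw_ne_zero_iff (hx₃ : x₃ ≠ 0) :
    wdw a₁ a₂ b c₁ c₂ x₁ x₂ x₃ ≠ 0 ↔ a₁ * c₂ ≠ a₂ * c₁ := by
  rw [wdw_eq hx₃, div_ne_zero_iff, mul_ne_zero_iff, sub_ne_zero]
  exact ⟨fun h => h.1.2.symm, fun h => ⟨⟨two_ne_zero, h.symm⟩, pow_ne_zero 3 hx₃⟩⟩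

end

/-- `ω` is a contact form on `{x₃ > 0}` (i.e. `ω ∧ dω` vanishes at no point of the
half-space) if and only if `a₁c₂ ≠ a₂c₁`. -/
theorem stmt9 (a₁ a₂ b c₁ c₂ : ℝ) :
    (∀ x₁ x₂ x₃ : ℝ, 0 < x₃ → wdw a₁ a₂ b c₁ c₂ x₁ x₂ x₃ ≠ 0) ↔ a₁ * c₂ ≠ a₂ * c₁ :=
  ⟨fun h => (wdw_ne_zero_iff one_ne_zero).1 (h 0 0 1 one_pos),
    fun h _ _ _ hx₃ => (wdw_ne_zero_iff hx₃.ne').2 h⟩
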